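/- For any symmetric positive definite nominal matrix Ẑ ∈ S_{++}^d and radius ρ > 0, the set G^+ = {Z ∈ S_+^d : G(Z,Ẑ) ≤ ρ and Z ⪰ λ_min(Ẑ) I} is convex and compact. -/

import Mathlib

/-!
Put `B = Ẑ^{1/2}` and `X = B Z B`. For `R = X^{1/2}` and `Y ≻ 0`, positivity of
`Tr((R - Y) Y⁻¹ (R - Y)) = Tr(X Y⁻¹) + Tr Y - 2 Tr R` together with the choice `Y = R + ε I` gives
`2 Tr X^{1/2} = inf_{Y ≻ 0} (Tr(X Y⁻¹) + Tr Y)`. So `G(Z, Ẑ) ≤ ρ` is the conjunction over `Y ≻ 0` of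
the constraints `Tr Z - Tr(B Z B Y⁻¹) ≤ ρ² - Tr Ẑ + Tr Y`, which are affine in `Z`: the set is an
intersection of closed convex sets. Testing with `Y = 2 Ẑ` gives `Tr Z ≤ 2 (ρ² + Tr Ẑ)`, and the
entries of a positive semidefinite matrix are bounded by its trace, so the set is also bounded.
-/

open Matrix

/-- The positive semidefinite square root of a matrix (zero if the matrix is
not positive semidefinite). -/
noncomputable def psdSqrt {d : ℕ} (A : Matrix (Fin d) (Fin d) ℝ) :
    Matrix (Fin d) (Fin d) ℝ := by
  classical exact if h : A.PosSemidef then h.1.eigenvectorUnitary.1 *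
    diagonal ((↑) ∘ Real.sqrt ∘ h.1.eigenvalues) * (star h.1.eigenvectorUnitary : Matrix (Fin d) (Fin d) ℝ)
    else 0

/-- The Gelbrich distance between covariance matrices. -/
noncomputable def gelbrich {d : ℕ} (S1 S2 : Matrix (Fin d) (Fin d) ℝ) : ℝ :=
  Real.sqrt (S1 + S2 - (2 : ℝ) • psdSqrt (psdSqrt S2 * S1 * psdSqrt S2)).trace

/-- The smallest eigenvalue of a Hermitian matrix. -/
noncomputable def lamMin {d : ℕ} (Z : Matrix (Fin d) (Fin d) ℝ)
    (hZ : Z.IsHermitian) : ℝ :=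
  ⨅ i, hZ.eigenvalues i

open scoped MatrixOrder

namespace Matrix

variable {n R : Type*}

lemma isClosed_setOf_posSemidef : IsClosed {A : Matrix n n ℝ | A.PosSemidef} := by
  simp only [PosSemidef, Set.ofPred_and, Set.ofPred_forall]
  refine .inter (isClosed_eq continuous_id.matrix_conjTranspose continuous_id) <|
    isClosed_iInter fun x => isClosed_le continuous_const ?_
  unfold Finsupp.sum
  fun_prop

lemma isClosed_setOf_posSemidef_sub (C : Matrix n n ℝ) :
    IsClosed {A : Matrix n n ℝ | (A - C).PosSemidef} :=
  isClosed_setOf_posSemidef.preimage (continuous_id.sub continuous_const)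

lemma convex_setOf_posSemidef_sub (C : Matrix n n ℝ) :
    Convex ℝ {A : Matrix n n ℝ | (A - C).PosSemidef} := by
  intro A hA B hB a b ha hb hab
  have hC : a • (A - C) + b • (B - C) = a • A + b • B - C := by
    have : (a + b) • C = C := by rw [hab, one_smul]
    linear_combination (norm := module) -this
  simpa only [Set.mem_ofPred_eq, ← hC] using (hA.smul ha).add (hB.smul hb)

lemma convex_setOf_posSemidef : Convex ℝ {A : Matrix n n ℝ | A.PosSemidef} := by
  simpa only [sub_zero] using convex_setOf_posSemidef_sub 0

variable [Fintype n]

lemma PosSemidef.abs_apply_le_trace {A : Matrix n n ℝ} (hA : A.PosSemidef) (i j : n) :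
    |A i j| ≤ A.trace := by
  classical
  have hdiag (k : n) : A k k ≤ A.trace :=
    Finset.single_le_sum (f := fun l => A l l) (fun l _ => hA.diag_nonneg) (Finset.mem_univ k)
  have hsymm : A j i = A i j := by simpa using congrFun (congrFun hA.1 i) j
  have hplus := hA.dotProduct_mulVec_nonneg (Pi.single i 1 + Pi.single j 1)
  have hminus := hA.dotProduct_mulVec_nonneg (Pi.single i 1 - Pi.single j 1)
  simp only [star_trivial, mulVec_add, mulVec_sub, dotProduct_add, dotProduct_sub,
    add_dotProduct, sub_dotProduct, mulVec_single, single_dotProduct, one_mul,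
    MulOpposite.op_one, one_smul, col_apply, hsymm] at hplus hminus
  rw [abs_le]
  constructor <;> linarith [hdiag i, hdiag j]

lemma PosSemidef.trace_mul_nonneg {A B : Matrix n n ℝ} (hA : A.PosSemidef) (hB : B.PosSemidef) :
    0 ≤ (A * B).trace := by
  classical
  have hS := (CFC.sqrt_nonneg A).posSemidef
  rw [← CFC.sqrt_mul_sqrt_self A hA.nonneg, trace_mul_cycle, ← trace_mul_comm]
  have := hB.conjTranspose_mul_mul_same (CFC.sqrt A)
  rw [hS.1.eq] at this
  simpa only [Matrix.mul_assoc] using this.trace_nonneg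

lemma isCompact_of_isClosed_of_trace_le {s : Set (Matrix n n ℝ)} (hs : IsClosed s)
    (hpsd : ∀ Z ∈ s, Z.PosSemidef) {C : ℝ} (htr : ∀ Z ∈ s, Z.trace ≤ C) : IsCompact s := by
  refine (isCompact_univ_pi fun _ => isCompact_univ_pi fun _ => isCompact_Icc (a := -C) (b := C))
    |>.of_isClosed_subset hs fun Z hZ i _ j _ => abs_le.mp ?_
  exact ((hpsd Z hZ).abs_apply_le_trace i j).trans (htr Z hZ)

lemma isLinearMap_trace_sub_trace_mul_mul [CommRing R] (A C : Matrix n n R) :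
    IsLinearMap R fun Z : Matrix n n R => Z.trace - (A * Z * C).trace where
  map_add Z W := by simp only [Matrix.mul_add, Matrix.add_mul, trace_add]; ring
  map_smul c Z := by simp only [Matrix.mul_smul, Matrix.smul_mul, trace_smul, smul_eq_mul]; ring

variable [DecidableEq n]

lemma mul_inv_mul_eq_one_of_mul_self_eq [CommRing R] {A B : Matrix n n R} (hBA : B * B = A)
    (hA : IsUnit A.det) : B * A⁻¹ * B = 1 := by
  rw [← mul_eq_one_comm, ← Matrix.mul_assoc, hBA, A.mul_nonsing_inv hA]

lemma two_mul_trace_sqrt_le {X Y : Matrix n n ℝ} (hX : X.PosSemidef) (hY : Y.PosDef) :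
    2 * (CFC.sqrt X).trace ≤ (X * Y⁻¹).trace + Y.trace := by
  set R := CFC.sqrt X
  have hR : R.IsHermitian := (CFC.sqrt_nonneg X).posSemidef.1
  have hdet : IsUnit Y.det := (isUnit_iff_isUnit_det _).mp hY.isUnit
  have hYY : Y * Y⁻¹ = 1 := Y.mul_nonsing_inv hdet
  have hYY' : Y⁻¹ * Y = 1 := Y.nonsing_inv_mul hdet
  have hsq : (R - Y)ᴴ * Y⁻¹ * (R - Y) = R * Y⁻¹ * R - 2 • R + Y := by
    rw [conjTranspose_sub, hR.eq, hY.1.eq]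
    simp only [sub_mul, mul_sub, Matrix.mul_assoc, hYY, hYY', Matrix.mul_one, Matrix.one_mul]
    module
  have hnonneg := (hY.inv.posSemidef.conjTranspose_mul_mul_same (R - Y)).trace_nonneg
  rw [hsq, trace_add, trace_sub, trace_smul, trace_mul_cycle,
    CFC.sqrt_mul_sqrt_self X hX.nonneg] at hnonneg
  simp only [nsmul_eq_mul, Nat.cast_ofNat] at hnonneg
  linarith

lemma trace_mul_inv_sqrt_add_smul_one_le {X : Matrix n n ℝ} (hX : X.PosSemidef) {ε : ℝ}
    (hε : 0 < ε) : (X * (CFC.sqrt X + ε • 1)⁻¹).trace ≤ (CFC.sqrt X).trace := by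
  set R := CFC.sqrt X
  set Y := R + ε • (1 : Matrix n n ℝ)
  have hR : R.PosSemidef := (CFC.sqrt_nonneg X).posSemidef
  have hY : Y.PosDef := PosDef.posSemidef_add hR (PosDef.one.smul hε)
  have hRY : R * Y = X + ε • R := by
    rw [Matrix.mul_add, CFC.sqrt_mul_sqrt_self X hX.nonneg, Matrix.mul_smul, Matrix.mul_one]
  have hgap : R - X * Y⁻¹ = ε • (R * Y⁻¹) := by
    have : R * Y * Y⁻¹ = R := by
      rw [Matrix.mul_assoc, Y.mul_nonsing_inv (isUnit_iff_isUnit_det _ |>.mp hY.isUnit),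
        Matrix.mul_one]
    rw [hRY, Matrix.add_mul, Matrix.smul_mul] at this
    linear_combination (norm := module) -this
  have hnonneg : 0 ≤ (R - X * Y⁻¹).trace := by
    rw [hgap, trace_smul, smul_eq_mul]
    exact mul_nonneg hε.le (hR.trace_mul_nonneg hY.inv.posSemidef)
  rw [trace_sub] at hnonneg
  linarith

lemma le_two_mul_trace_sqrt_iff {X : Matrix n n ℝ} (hX : X.PosSemidef) {r : ℝ} :
    (∀ Y : Matrix n n ℝ, Y.PosDef → r ≤ (X * Y⁻¹).trace + Y.trace) ↔
      r ≤ 2 * (CFC.sqrt X).trace := by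
  refine ⟨fun h => le_of_forall_pos_le_add fun δ hδ => ?_,
    fun h Y hY => h.trans (two_mul_trace_sqrt_le hX hY)⟩
  set ε := δ / (Fintype.card n + 1)
  have hε : 0 < ε := by positivity
  have hεδ : ε * Fintype.card n ≤ δ := by
    rw [div_mul_eq_mul_div, div_le_iff₀ (by positivity)]
    nlinarith
  have hY : (CFC.sqrt X + ε • 1).PosDef :=
    PosDef.posSemidef_add (CFC.sqrt_nonneg X).posSemidef (PosDef.one.smul hε)
  have := h _ hY
  rw [trace_add, trace_smul, trace_one, smul_eq_mul] at this
  linarith [trace_mul_inv_sqrt_add_smul_one_le hX hε]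

end Matrix

section Gelbrich

variable {d : ℕ}

lemma psdSqrt_eq_sqrt {A : Matrix (Fin d) (Fin d) ℝ} (hA : A.PosSemidef) :
    psdSqrt A = CFC.sqrt A := by
  rw [CFC.sqrt_eq_real_sqrt A hA.nonneg, cfcₙ_eq_cfc, hA.1.cfc_eq, IsHermitian.cfc, psdSqrt,
    dif_pos hA, Unitary.conjStarAlgAut_apply]
  rfl

lemma posSemidef_psdSqrt (A : Matrix (Fin d) (Fin d) ℝ) : (psdSqrt A).PosSemidef := by
  by_cases hA : A.PosSemidef
  · rw [psdSqrt_eq_sqrt hA]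
    exact (CFC.sqrt_nonneg A).posSemidef
  · rw [psdSqrt, dif_neg hA]
    exact .zero

lemma posSemidef_psdSqrt_mul_mul_psdSqrt {Z : Matrix (Fin d) (Fin d) ℝ} (hZ : Z.PosSemidef)
    (A : Matrix (Fin d) (Fin d) ℝ) : (psdSqrt A * Z * psdSqrt A).PosSemidef := by
  simpa only [(posSemidef_psdSqrt A).1.eq] using hZ.conjTranspose_mul_mul_same (psdSqrt A)

lemma gelbrich_le_iff {Z Zh : Matrix (Fin d) (Fin d) ℝ} (hZ : Z.PosSemidef) {ρ : ℝ}
    (hρ : 0 ≤ ρ) :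
    gelbrich Z Zh ≤ ρ ↔ ∀ Y : Matrix (Fin d) (Fin d) ℝ, Y.PosDef →
      Z.trace - (psdSqrt Zh * Z * psdSqrt Zh * Y⁻¹).trace ≤ ρ ^ 2 - Zh.trace + Y.trace := by
  have hX := posSemidef_psdSqrt_mul_mul_psdSqrt hZ Zh
  rw [gelbrich, Real.sqrt_le_left hρ, psdSqrt_eq_sqrt hX, trace_sub, trace_add, trace_smul,
    smul_eq_mul, ← sub_le_comm, ← le_two_mul_trace_sqrt_iff hX]
  exact forall₂_congr fun Y _ => by constructor <;> intro h <;> linarith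

lemma setOf_posSemidef_and_gelbrich_le (Zh : Matrix (Fin d) (Fin d) ℝ) {ρ : ℝ} (hρ : 0 ≤ ρ) :
    {Z : Matrix (Fin d) (Fin d) ℝ | Z.PosSemidef ∧ gelbrich Z Zh ≤ ρ} =
      {Z | Z.PosSemidef} ∩ ⋂ Y : {Y : Matrix (Fin d) (Fin d) ℝ // Y.PosDef},
        {Z | Z.trace - (psdSqrt Zh * Z * psdSqrt Zh * Y.1⁻¹).trace ≤
          ρ ^ 2 - Zh.trace + Y.1.trace} := by
  ext Z
  simp only [Set.mem_ofPred_eq, Set.mem_inter_iff, Set.mem_iInter, Subtype.forall]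
  exact and_congr_right fun hZ => gelbrich_le_iff hZ hρ

lemma convex_setOf_posSemidef_and_gelbrich_le (Zh : Matrix (Fin d) (Fin d) ℝ) {ρ : ℝ}
    (hρ : 0 ≤ ρ) : Convex ℝ {Z : Matrix (Fin d) (Fin d) ℝ | Z.PosSemidef ∧ gelbrich Z Zh ≤ ρ} := by
  rw [setOf_posSemidef_and_gelbrich_le Zh hρ]
  refine convex_setOf_posSemidef.inter <| convex_iInter fun Y => ?_
  simpa only [Matrix.mul_assoc] using convex_halfSpace_le
    (isLinearMap_trace_sub_trace_mul_mul (psdSqrt Zh) (psdSqrt Zh * Y.1⁻¹)) _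

lemma isClosed_setOf_posSemidef_and_gelbrich_le (Zh : Matrix (Fin d) (Fin d) ℝ) {ρ : ℝ}
    (hρ : 0 ≤ ρ) : IsClosed {Z : Matrix (Fin d) (Fin d) ℝ | Z.PosSemidef ∧ gelbrich Z Zh ≤ ρ} := by
  rw [setOf_posSemidef_and_gelbrich_le Zh hρ]
  exact isClosed_setOf_posSemidef.inter <| isClosed_iInter fun Y =>
    isClosed_le (by fun_prop) continuous_const

lemma trace_le_of_gelbrich_le {Z Zh : Matrix (Fin d) (Fin d) ℝ} (hZ : Z.PosSemidef)
    (hZh : Zh.PosDef) {ρ : ℝ} (hρ : 0 ≤ ρ) (h : gelbrich Z Zh ≤ ρ) :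
    Z.trace ≤ 2 * (ρ ^ 2 + Zh.trace) := by
  have hdet : IsUnit Zh.det := (isUnit_iff_isUnit_det _).mp hZh.isUnit
  have hsqrt : psdSqrt Zh * Zh⁻¹ * psdSqrt Zh = 1 :=
    mul_inv_mul_eq_one_of_mul_self_eq
      (by rw [psdSqrt_eq_sqrt hZh.posSemidef, CFC.sqrt_mul_sqrt_self Zh hZh.posSemidef.nonneg])
      hdet
  have htrace : (psdSqrt Zh * Z * psdSqrt Zh * ((2 : ℝ) • Zh)⁻¹).trace = Z.trace / 2 := by
    rw [Zh.inv_smul (2 : ℝ) hdet, invOf_eq_inv, Matrix.mul_smul, trace_smul, smul_eq_mul,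
      Matrix.mul_assoc, trace_mul_comm, Matrix.mul_assoc, ← Matrix.mul_assoc _ Zh⁻¹,
      ← Matrix.mul_assoc, hsqrt, Matrix.one_mul]
    ring
  have := (gelbrich_le_iff hZ hρ).mp h ((2 : ℝ) • Zh) (hZh.smul two_pos)
  rw [htrace, trace_smul, smul_eq_mul] at this
  linarith

end Gelbrich

/-- For a positive definite nominal matrix `Ẑ` and radius `ρ > 0`, the set
`G⁺ = {Z ⪰ 0 : G(Z, Ẑ) ≤ ρ, Z ⪰ λ_min(Ẑ) I}` is convex and compact. -/
theorem gelbrich_ball_convex_compact {d : ℕ}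
    (Zh : Matrix (Fin d) (Fin d) ℝ) (hZh : Zh.PosDef) (ρ : ℝ) (hρ : 0 < ρ) :
    Convex ℝ {Z : Matrix (Fin d) (Fin d) ℝ | Z.PosSemidef ∧ gelbrich Z Zh ≤ ρ ∧
        (Z - lamMin Zh hZh.1 • (1 : Matrix (Fin d) (Fin d) ℝ)).PosSemidef} ∧
    IsCompact {Z : Matrix (Fin d) (Fin d) ℝ | Z.PosSemidef ∧ gelbrich Z Zh ≤ ρ ∧
        (Z - lamMin Zh hZh.1 • (1 : Matrix (Fin d) (Fin d) ℝ)).PosSemidef} := by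
  simp only [← and_assoc]
  rw [Set.ofPred_and]
  refine ⟨(convex_setOf_posSemidef_and_gelbrich_le Zh hρ.le).inter
    (convex_setOf_posSemidef_sub _), ?_⟩
  exact isCompact_of_isClosed_of_trace_le
    ((isClosed_setOf_posSemidef_and_gelbrich_le Zh hρ.le).inter
      (isClosed_setOf_posSemidef_sub _)) (fun Z hZ => hZ.1.1)
    fun Z hZ => trace_le_of_gelbrich_le hZ.1.1 hZh hρ.le hZ.1.2
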